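/- Let R be an associative ring with identity and g(x) a polynomial with all coefficients in the center C(R) of R. Regard g(x) as a polynomial over the formal power series ring R[[t]] by sending each coefficient a to the constant power series a (which is central in R[[t]]). If R[[t]] is strongly g(x)-clean, then R is strongly g(x)-clean. -/

import Mathlib

open Polynomial

def IsStronglyClean {R : Type*} [Semiring R] (g : R[X]) (r : R) : Prop :=
  ∃ s u : R, g.eval s = 0 ∧ IsUnit u ∧ r = s + u ∧ s * u = u * s

theorem IsStronglyClean.map {R S : Type*} [Semiring R] [Semiring S] (φ : R →+* S) {g : R[X]}
    {r : R} (h : IsStronglyClean g r) : IsStronglyClean (g.map φ) (φ r) := by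
  obtain ⟨s, u, hs, hu, rfl, hsu⟩ := h
  refine ⟨φ s, φ u, ?_, hu.map φ, map_add φ s u, by rw [← map_mul, hsu, map_mul]⟩
  rw [eval_map, eval₂_hom, hs, map_zero]

theorem PowerSeries.map_constantCoeff_map_C {R : Type*} [Semiring R] (g : R[X]) :
    (g.map (PowerSeries.C (R := R))).map PowerSeries.constantCoeff = g := by
  rw [Polynomial.map_map, PowerSeries.constantCoeff_comp_C, Polynomial.map_id]

theorem strongly_gx_clean_of_powerSeries_general (R : Type*) [Ring R]
    (g : Polynomial R)
    (hP : ∀ f : PowerSeries R, ∃ s u : PowerSeries R,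
      (g.map (PowerSeries.C (R := R))).eval s = 0 ∧ IsUnit u ∧ f = s + u ∧ s * u = u * s) :
    ∀ r : R, ∃ s u : R, g.eval s = 0 ∧ IsUnit u ∧ r = s + u ∧ s * u = u * s := by
  intro r
  have h : IsStronglyClean _ _ := IsStronglyClean.map PowerSeries.constantCoeff (hP (.C r))
  rwa [PowerSeries.map_constantCoeff_map_C, PowerSeries.constantCoeff_C] at h

/-- If the formal power series ring `R[[t]]` is strongly `g(x)`-clean, where
`g` has central coefficients and is regarded over `R[[t]]` via constant power
series, then `R` is strongly `g(x)`-clean. -/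
theorem strongly_gx_clean_of_powerSeries (R : Type*) [Ring R]
    (g : Polynomial R) (hg : ∀ i, g.coeff i ∈ Set.center R)
    (hP : ∀ f : PowerSeries R, ∃ s u : PowerSeries R,
      (g.map (PowerSeries.C (R := R))).eval s = 0 ∧ IsUnit u ∧ f = s + u ∧ s * u = u * s) :
    ∀ r : R, ∃ s u : R, g.eval s = 0 ∧ IsUnit u ∧ r = s + u ∧ s * u = u * s :=
  strongly_gx_clean_of_powerSeries_general R g hP
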